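/- Let n ≥ p + 1, let x_1, …, x_n ∈ ℝ^p satisfy the Haar condition (every p of the vectors x_1, …, x_n are linearly independent), let y_1, …, y_n ∈ ℝ, fix 0 ≤ k ≤ n − (p + 1), and define f_k(θ) = min over all subsets I of size n − k of max_{i ∈ I} |y_i − x_iᵀθ|. Then every local minimizer of f_k is the unique global minimizer of ρ_{I*}(θ) = max_{i ∈ I*} |y_i − x_iᵀθ| for some subset I* of cardinality p + 1; consequently, the set of local minimizers of f_k is finite and has cardinality at most C(n, p+1) (the binomial coefficient n choose p+1). -/

import Mathlib

/-- The Chebyshev (l∞) residual function `ρ_I(θ) = max_{i ∈ I} |y i − x iᵀ θ|`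
(defined as `0` for empty `I`). -/
noncomputable def rho (n p : ℕ) (x : Fin n → Fin p → ℝ) (y : Fin n → ℝ)
    (I : Finset (Fin n)) (θ : Fin p → ℝ) : ℝ :=
  if hI : I.Nonempty then I.sup' hI (fun i => |y i - ∑ j, x i j * θ j|) else 0

/-- `f_k(θ) = min_{I ⊆ {1,…,n}, |I| = n − k} ρ_I(θ)` (defined as `0` if no such `I`). -/
noncomputable def fk (n p : ℕ) (x : Fin n → Fin p → ℝ) (y : Fin n → ℝ) (k : ℕ)
    (θ : Fin p → ℝ) : ℝ :=
  if h : (Finset.powersetCard (n - k) (Finset.univ : Finset (Fin n))).Nonempty then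
    (Finset.powersetCard (n - k) (Finset.univ : Finset (Fin n))).inf' h
      (fun I => rho n p x y I θ)
  else 0

/-!
A local minimizer `θ*` of `f_k` is attained by some `ρ_I` with `|I| = n - k`; since `f_k ≤ ρ_I`,
`θ*` is a local, hence (by convexity) global, minimizer of `ρ_I`. Helly's theorem in `ℝ^p`,
applied to the convex slabs `{θ | |y_i - x_iᵀθ| ≤ c}`, shows that `min ρ_I` is already attained
as `min ρ_J` for a `(p+1)`-subset `J ⊆ I`, so `θ*` also minimizes `ρ_J`. Under the Haar
condition the minimizer of `ρ_J` is unique: two minimizers have a common midpoint minimizer at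
which, if their residuals differ somewhere on `J`, at most `p` residuals are extremal; these
can be shrunk simultaneously along a direction obtained by solving a linear system, contradicting
minimality. Thus local minimizers inject into the `(p+1)`-subsets of `{1, …, n}`.
-/

open Set Filter Topology Matrix Finset

section LinearAlgebra

variable {ι K : Type*} [Field K]

theorem exists_forall_dotProduct_eq {m : Type*} [Fintype m] {s : Finset ι} {v : ι → m → K}
    (hv : LinearIndependent K fun i : s => v i) (w : ι → K) :
    ∃ e : m → K, ∀ i ∈ s, v i ⬝ᵥ e = w i := by
  let M : Matrix s m K := of fun i => v i
  have hsurj : Function.Surjective M.mulVecLin := by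
    rw [← LinearMap.range_eq_top]
    apply Submodule.eq_top_of_finrank_eq
    change M.rank = _
    rw [LinearIndependent.rank_matrix (M := M) hv, Module.finrank_fintype_fun_eq_card]
  obtain ⟨e, he⟩ := hsurj fun i => w i
  exact ⟨e, fun i hi => congrFun he ⟨i, hi⟩⟩

theorem eq_zero_of_forall_dotProduct_eq_zero {m : Type*} [Fintype m] {s : Finset ι}
    {v : ι → m → K} (hv : LinearIndependent K fun i : s => v i) (hs : s.card = Fintype.card m)
    {d : m → K} (hd : ∀ i ∈ s, v i ⬝ᵥ d = 0) : d = 0 := by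
  have hspan : Submodule.span K (range fun i : s => v i) = ⊤ :=
    hv.span_eq_top_of_card_eq_finrank' (by simpa [Module.finrank_fintype_fun_eq_card] using hs)
  refine dotProduct_eq_zero d fun u => ?_
  have hu : u ∈ Submodule.span K (range fun i : s => v i) := hspan ▸ Submodule.mem_top
  rw [dotProduct_comm]
  induction hu using Submodule.span_induction with
  | mem u hu =>
    obtain ⟨i, rfl⟩ := hu
    exact hd i i.2
  | zero => exact zero_dotProduct d
  | add u w _ _ hu hw => rw [add_dotProduct, hu, hw, add_zero]
  | smul c u _ hu => rw [smul_dotProduct, hu, smul_zero]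

def IsHaar {p : ℕ} (x : ι → Fin p → K) : Prop :=
  ∀ s : Finset ι, s.card = p → LinearIndependent K fun i : s => x i

theorem IsHaar.linearIndependent_of_card_le [Fintype ι] {p : ℕ} {x : ι → Fin p → K}
    (h : IsHaar x) (hp : p ≤ Fintype.card ι) {B : Finset ι} (hB : B.card ≤ p) :
    LinearIndependent K fun i : B => x i := by
  obtain ⟨s, hBs, -, hs⟩ := exists_subsuperset_card_eq (subset_univ B) hB (by simpa using hp)
  exact (h s hs).comp (fun i : B => ⟨i, hBs i.2⟩) fun i j hij => Subtype.ext (Subtype.mk.inj hij)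

end LinearAlgebra

theorem ConvexOn.finset_sup' {𝕜 E β ι : Type*} [Semiring 𝕜] [PartialOrder 𝕜] [AddCommMonoid E]
    [AddCommMonoid β] [LinearOrder β] [IsOrderedAddMonoid β] [SMul 𝕜 E] [Module 𝕜 β]
    [PosSMulMono 𝕜 β] {s : Set E} {t : Finset ι} (ht : t.Nonempty) {f : ι → E → β}
    (hf : ∀ i ∈ t, ConvexOn 𝕜 s (f i)) : ConvexOn 𝕜 s fun z => t.sup' ht fun i => f i z := by
  refine ⟨(hf _ ht.choose_spec).1, fun u hu w hw a b ha hb hab => sup'_le _ _ fun i hi => ?_⟩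
  calc f i (a • u + b • w) ≤ a • f i u + b • f i w := (hf i hi).2 hu hw ha hb hab
    _ ≤ a • t.sup' ht (fun j => f j u) + b • t.sup' ht (fun j => f j w) := by
      gcongr <;> exact le_sup' (f · _) hi

section Residuals

variable {m : Type*} [Fintype m]

theorem sub_dotProduct_add_smul (c : ℝ) (v θ₁ θ₂ : m → ℝ) {a b : ℝ} (hab : a + b = 1) :
    c - v ⬝ᵥ (a • θ₁ + b • θ₂) = a * (c - v ⬝ᵥ θ₁) + b * (c - v ⬝ᵥ θ₂) := by
  rw [dotProduct_add, dotProduct_smul, dotProduct_smul, smul_eq_mul, smul_eq_mul]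
  linear_combination c * hab.symm

theorem convexOn_abs_sub_dotProduct (c : ℝ) (v : m → ℝ) :
    ConvexOn ℝ univ fun θ => |c - v ⬝ᵥ θ| := by
  refine ⟨convex_univ, fun θ₁ _ θ₂ _ a b ha hb hab => ?_⟩
  calc |c - v ⬝ᵥ (a • θ₁ + b • θ₂)| = |a * (c - v ⬝ᵥ θ₁) + b * (c - v ⬝ᵥ θ₂)| := by
        rw [sub_dotProduct_add_smul c v θ₁ θ₂ hab]
    _ ≤ |a * (c - v ⬝ᵥ θ₁)| + |b * (c - v ⬝ᵥ θ₂)| := abs_add_le _ _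
    _ = a • |c - v ⬝ᵥ θ₁| + b • |c - v ⬝ᵥ θ₂| := by
        rw [abs_mul, abs_mul, abs_of_nonneg ha, abs_of_nonneg hb, smul_eq_mul, smul_eq_mul]

end Residuals

section Chebyshev

variable {n p : ℕ} {x : Fin n → Fin p → ℝ} {y : Fin n → ℝ}

theorem rho_of_nonempty {I : Finset (Fin n)} (hI : I.Nonempty) (θ : Fin p → ℝ) :
    rho n p x y I θ = I.sup' hI fun i => |y i - x i ⬝ᵥ θ| :=
  dif_pos hI

theorem abs_sub_dotProduct_le_rho {I : Finset (Fin n)} {i : Fin n} (hi : i ∈ I)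
    (θ : Fin p → ℝ) : |y i - x i ⬝ᵥ θ| ≤ rho n p x y I θ := by
  rw [rho_of_nonempty ⟨i, hi⟩]
  exact le_sup' (fun i => |y i - x i ⬝ᵥ θ|) hi

theorem rho_le_iff {I : Finset (Fin n)} (hI : I.Nonempty) {θ : Fin p → ℝ} {c : ℝ} :
    rho n p x y I θ ≤ c ↔ ∀ i ∈ I, |y i - x i ⬝ᵥ θ| ≤ c := by
  rw [rho_of_nonempty hI]
  exact sup'_le_iff hI _

theorem rho_lt_iff {I : Finset (Fin n)} (hI : I.Nonempty) {θ : Fin p → ℝ} {c : ℝ} :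
    rho n p x y I θ < c ↔ ∀ i ∈ I, |y i - x i ⬝ᵥ θ| < c := by
  rw [rho_of_nonempty hI]
  exact sup'_lt_iff hI

theorem rho_mono {I J : Finset (Fin n)} (hJI : J ⊆ I) (hJ : J.Nonempty) (θ : Fin p → ℝ) :
    rho n p x y J θ ≤ rho n p x y I θ :=
  (rho_le_iff hJ).2 fun _ hi => abs_sub_dotProduct_le_rho (hJI hi) θ

theorem convexOn_rho (I : Finset (Fin n)) : ConvexOn ℝ univ (rho n p x y I) := by
  by_cases hI : I.Nonempty
  · rw [show rho n p x y I = _ from funext (rho_of_nonempty hI)]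
    exact ConvexOn.finset_sup' hI fun i _ => convexOn_abs_sub_dotProduct (y i) (x i)
  · rw [show rho n p x y I = fun _ => 0 from funext fun _ => dif_neg hI]
    exact convexOn_const 0 convex_univ

theorem exists_isMin_rho_of_isLocalMin_fk {k : ℕ} {θs : Fin p → ℝ}
    (h : IsLocalMin (fk n p x y k) θs) :
    ∃ I : Finset (Fin n), I.card = n - k ∧ ∀ θ, rho n p x y I θs ≤ rho n p x y I θ := by
  have hne : (powersetCard (n - k) (univ : Finset (Fin n))).Nonempty :=
    powersetCard_nonempty.2 (by simp)
  obtain ⟨I, hI, hfk⟩ := exists_mem_eq_inf' hne fun I => rho n p x y I θs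
  have hle : ∀ θ, fk n p x y k θ ≤ rho n p x y I θ := fun θ => by
    rw [fk, dif_pos hne]
    exact inf'_le _ hI
  refine ⟨I, mem_powersetCard_univ.1 hI,
    IsMinOn.of_isLocalMin_of_convex_univ ?_ (convexOn_rho I)⟩
  filter_upwards [h] with θ hθ
  calc rho n p x y I θs = fk n p x y k θs := by rw [fk, dif_pos hne, hfk]
    _ ≤ fk n p x y k θ := hθ
    _ ≤ rho n p x y I θ := hle θ

theorem exists_card_eq_isMin_rho {I : Finset (Fin n)} (hI : p + 1 ≤ I.card) {θs : Fin p → ℝ}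
    (hmin : ∀ θ, rho n p x y I θs ≤ rho n p x y I θ) :
    ∃ J ⊆ I, J.card = p + 1 ∧ ∀ θ, rho n p x y J θs ≤ rho n p x y J θ := by
  by_contra! hcon
  set P := I.powersetCard (p + 1)
  have hIne : I.Nonempty := card_pos.1 (by omega)
  have hPne : P.Nonempty := powersetCard_nonempty.2 hI
  choose! g hg using fun J (hJ : J ∈ P) =>
    hcon J (mem_powersetCard.1 hJ).1 (mem_powersetCard.1 hJ).2
  set c := P.sup' hPne fun J => rho n p x y J (g J)
  have hc : c < rho n p x y I θs := by
    refine (sup'_lt_iff hPne).2 fun J hJ => (hg J hJ).trans_le ?_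
    obtain ⟨hJI, hJ⟩ := mem_powersetCard.1 hJ
    exact rho_mono hJI (card_pos.1 (by omega)) θs
  -- At most `p + 1` slab indices lie in some `J ∈ P`, and those slabs all contain `g J`.
  obtain ⟨θc, hθc⟩ : (⋂ i ∈ I, {θ : Fin p → ℝ | |y i - x i ⬝ᵥ θ| ≤ c}).Nonempty := by
    refine Convex.helly_theorem' (𝕜 := ℝ) (fun i _ => ?_) fun K hKI hK => ?_
    · simpa only [sep_univ] using (convexOn_abs_sub_dotProduct (y i) (x i)).convex_le c
    obtain ⟨J, hKJ, hJI, hJ⟩ := exists_subsuperset_card_eq hKI (by simpa using hK) hI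
    have hJP : J ∈ P := mem_powersetCard.2 ⟨hJI, hJ⟩
    refine ⟨g J, mem_iInter₂.2 fun i hi => ?_⟩
    exact (abs_sub_dotProduct_le_rho (hKJ hi) _).trans (le_sup' (fun J => rho n p x y J (g J)) hJP)
  have : rho n p x y I θc ≤ c := (rho_le_iff hIne).2 fun i hi => mem_iInter₂.1 hθc i hi
  exact (hmin θc).not_gt (this.trans_lt hc)

theorem exists_rho_lt_of_active_dotProduct_eq {J : Finset (Fin n)} (hJ : J.Nonempty)
    {θ e : Fin p → ℝ} (hpos : 0 < rho n p x y J θ)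
    (he : ∀ i ∈ J, |y i - x i ⬝ᵥ θ| = rho n p x y J θ → x i ⬝ᵥ e = y i - x i ⬝ᵥ θ) :
    ∃ θ', rho n p x y J θ' < rho n p x y J θ := by
  have hev : ∀ i ∈ J, ∀ᶠ t in 𝓝[>] (0 : ℝ), |y i - x i ⬝ᵥ (θ + t • e)| < rho n p x y J θ := by
    intro i hi
    have hres : ∀ t : ℝ, y i - x i ⬝ᵥ (θ + t • e) = (y i - x i ⬝ᵥ θ) - t * x i ⬝ᵥ e := by
      intro t
      rw [dotProduct_add, dotProduct_smul, smul_eq_mul]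
      ring
    simp_rw [hres]
    by_cases hact : |y i - x i ⬝ᵥ θ| = rho n p x y J θ
    · filter_upwards [Ioo_mem_nhdsGT zero_lt_one] with t ⟨ht₀, ht₁⟩
      rw [he i hi hact, ← one_sub_mul, abs_mul, hact, abs_of_pos (sub_pos.2 ht₁)]
      nlinarith
    · have hlt := (abs_sub_dotProduct_le_rho hi θ).lt_of_ne hact
      refine eventually_nhdsWithin_of_eventually_nhds ?_
      have hcont : Continuous fun t : ℝ => |(y i - x i ⬝ᵥ θ) - t * x i ⬝ᵥ e| := by fun_prop
      exact hcont.continuousAt.eventually_lt continuousAt_const (by simpa using hlt)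
  obtain ⟨t, ht⟩ := ((eventually_all_finset J).2 hev).exists
  exact ⟨θ + t • e, (rho_lt_iff hJ).2 ht⟩

theorem eq_of_isMin_rho (haar : IsHaar x) {J : Finset (Fin n)} (hJ : J.card = p + 1)
    {θ₁ θ₂ : Fin p → ℝ} (h₁ : ∀ θ, rho n p x y J θ₁ ≤ rho n p x y J θ)
    (h₂ : ∀ θ, rho n p x y J θ₂ ≤ rho n p x y J θ) : θ₁ = θ₂ := by
  have hJne : J.Nonempty := card_pos.1 (by omega)
  have hpn : p ≤ Fintype.card (Fin n) := by
    have := card_le_univ J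
    omega
  have h₂₁ : rho n p x y J θ₂ = rho n p x y J θ₁ := le_antisymm (h₂ θ₁) (h₁ θ₂)
  set θm := (1 / 2 : ℝ) • θ₁ + (1 / 2 : ℝ) • θ₂
  have hmid : rho n p x y J θm = rho n p x y J θ₁ := by
    refine le_antisymm ?_ (h₁ θm)
    have := (convexOn_rho (x := x) (y := y) J).2 (mem_univ θ₁) (mem_univ θ₂)
      (by norm_num : (0 : ℝ) ≤ 1 / 2) (by norm_num : (0 : ℝ) ≤ 1 / 2) (by norm_num)
    rw [smul_eq_mul, smul_eq_mul, h₂₁] at this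
    linarith
  have hdot : ∀ i ∈ J, x i ⬝ᵥ θ₁ = x i ⬝ᵥ θ₂ := by
    intro i₀ hi₀
    by_contra hne
    have hlt : |y i₀ - x i₀ ⬝ᵥ θm| < rho n p x y J θm := by
      rw [sub_dotProduct_add_smul _ _ _ _ (by norm_num), hmid]
      have b₁ := abs_le.1 (abs_sub_dotProduct_le_rho (x := x) (y := y) hi₀ θ₁)
      have b₂ := abs_le.1 (abs_sub_dotProduct_le_rho (x := x) (y := y) hi₀ θ₂)
      rw [h₂₁] at b₂
      rw [abs_lt]
      rcases lt_or_gt_of_ne hne with h | h <;> constructor <;> linarith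
    set B := J.filter fun i => |y i - x i ⬝ᵥ θm| = rho n p x y J θm
    have hB : B.card ≤ p := by
      have hBsub : B ⊆ J.erase i₀ := fun i hi => by
        obtain ⟨hiJ, hact⟩ := mem_filter.1 hi
        exact mem_erase.2 ⟨by rintro rfl; exact hlt.ne hact, hiJ⟩
      have := Finset.card_le_card hBsub
      rw [card_erase_of_mem hi₀, hJ] at this
      omega
    obtain ⟨e, he⟩ := exists_forall_dotProduct_eq (haar.linearIndependent_of_card_le hpn hB)
      fun i => y i - x i ⬝ᵥ θm
    obtain ⟨θ', hθ'⟩ := exists_rho_lt_of_active_dotProduct_eq hJne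
      ((abs_nonneg _).trans_lt hlt) fun i hi hact => he i (mem_filter.2 ⟨hi, hact⟩)
    exact (h₁ θ').not_gt (hmid ▸ hθ')
  obtain ⟨s, hsJ, hs⟩ := J.exists_subset_card_eq (show p ≤ J.card by omega)
  refine sub_eq_zero.1 (eq_zero_of_forall_dotProduct_eq_zero (haar s hs) (by simpa using hs)
    fun i hi => ?_)
  rw [dotProduct_sub, hdot i (hsJ hi), sub_self]

end Chebyshev

theorem Set.finite_and_ncard_le_card_of_witness {α β : Type*} {S : Set α} {T : Finset β}
    {P : α → β → Prop} (hex : ∀ a ∈ S, ∃ b ∈ T, P a b)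
    (huniq : ∀ a₁ a₂ b, P a₁ b → P a₂ b → a₁ = a₂) : S.Finite ∧ S.ncard ≤ T.card := by
  rcases S.eq_empty_or_nonempty with rfl | ⟨a₀, ha₀⟩
  · simp
  have : Nonempty β := ⟨(hex a₀ ha₀).choose⟩
  choose! f hfT hfP using hex
  have hinj : InjOn f S := fun a ha b hb hab => huniq a b (f b) (hab ▸ hfP a ha) (hfP b hb)
  refine ⟨Finite.of_injOn hfT hinj T.finite_toSet, ?_⟩
  simpa using ncard_le_ncard_of_injOn f hfT hinj T.finite_toSet

/-- Under the Haar condition, every local minimizer of `f_k` is the unique global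
minimizer of `ρ_{I*}` for some `(p+1)`-element subset `I*`; consequently the set of
local minimizers of `f_k` is finite with at most `C(n, p+1)` elements. -/
theorem localMin_fk_unique_globalMin_and_card_bound (n p k : ℕ) (hn : p + 1 ≤ n)
    (hk : k ≤ n - (p + 1)) (x : Fin n → Fin p → ℝ) (y : Fin n → ℝ)
    (haar : ∀ s : Finset (Fin n), s.card = p →
      LinearIndependent ℝ (fun i : s => x i)) :
    (∀ θs : Fin p → ℝ, IsLocalMin (fk n p x y k) θs →
      ∃ Istar : Finset (Fin n), Istar.card = p + 1 ∧
        (∀ θ : Fin p → ℝ, rho n p x y Istar θs ≤ rho n p x y Istar θ) ∧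
        (∀ θ' : Fin p → ℝ,
          (∀ θ : Fin p → ℝ, rho n p x y Istar θ' ≤ rho n p x y Istar θ) → θ' = θs)) ∧
    {θs : Fin p → ℝ | IsLocalMin (fk n p x y k) θs}.Finite ∧
    {θs : Fin p → ℝ | IsLocalMin (fk n p x y k) θs}.ncard ≤ Nat.choose n (p + 1) := by
  have hmin : ∀ θs, IsLocalMin (fk n p x y k) θs → ∃ J : Finset (Fin n),
      J.card = p + 1 ∧ ∀ θ, rho n p x y J θs ≤ rho n p x y J θ := fun θs h => by
    obtain ⟨I, hI, hImin⟩ := exists_isMin_rho_of_isLocalMin_fk h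
    obtain ⟨J, -, hJ⟩ := exists_card_eq_isMin_rho (by omega) hImin
    exact ⟨J, hJ⟩
  refine ⟨fun θs h => ?_, ?_⟩
  · obtain ⟨J, hJ, hJmin⟩ := hmin θs h
    exact ⟨J, hJ, hJmin, fun θ' h' => eq_of_isMin_rho haar hJ h' hJmin⟩
  have := Set.finite_and_ncard_le_card_of_witness (T := powersetCard (p + 1) univ)
    (P := fun θs J => J.card = p + 1 ∧ ∀ θ, rho n p x y J θs ≤ rho n p x y J θ)
    (fun θs h => (hmin θs h).imp fun J hJ => ⟨mem_powersetCard_univ.2 hJ.1, hJ⟩)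
    fun θ₁ θ₂ J h₁ h₂ => eq_of_isMin_rho haar h₁.1 h₁.2 h₂.2
  rwa [card_powersetCard, card_univ, Fintype.card_fin] at this
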